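/- arXiv:2204.00518 — 2 statements merged into one kernel-verified Lean document; each statement's English description precedes it below -/
import Mathlib

section
/- Let 0 < p₀ ≤ ∞ and 0 < p₁,…,pₙ ≤ ∞ with n/p₀ ≤ Σ_{i=1}^n 1/pᵢ. For any cube Q in ℝⁿ, the mixed Morrey norm of the indicator satisfies ‖χ_Q‖_{M^{p₀}_{p⃗}(ℝⁿ)} = |Q|^{1/p₀}. -/
open MeasureTheory ENNReal Filter Topology

/-- Iterated mixed-norm: innermost integration in the first coordinate. -/
noncomputable def mixedNorm : (n : ℕ) → (Fin n → ℝ) → ((Fin n → ℝ) → ℝ≥0∞) → ℝ≥0∞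
  | 0, _, f => f (fun i => i.elim0)
  | (n+1), p, f =>
      (∫⁻ t : ℝ, (mixedNorm n (fun i => p i.castSucc) (fun x => f (Fin.snoc x t)))
          ^ (p (Fin.last n))) ^ (1 / p (Fin.last n))

/-- Mixed-norm Lebesgue norm of a real valued function. -/
noncomputable def mixedLpNorm (n : ℕ) (p : Fin n → ℝ) (f : (Fin n → ℝ) → ℝ) : ℝ≥0∞ :=
  mixedNorm n p (fun x => ENNReal.ofReal |f x|)

/-- Open axis-parallel cube centered at `x` with side length `r`. -/
def cube (n : ℕ) (x : Fin n → ℝ) (r : ℝ) : Set (Fin n → ℝ) := Metric.ball x (r / 2)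

/-- Mixed Morrey norm. -/
noncomputable def morreyNorm (n : ℕ) (p₀ : ℝ) (p : Fin n → ℝ) (f : (Fin n → ℝ) → ℝ) : ℝ≥0∞ :=
  ⨆ (x : Fin n → ℝ) (r : ℝ) (_ : 0 < r),
    ENNReal.ofReal r ^ ((n : ℝ) / p₀ - ∑ i, 1 / p i)
      * mixedLpNorm n p (Set.indicator (cube n x r) f)

/-- Conjugate exponent. -/
noncomputable def conjExp (p : ℝ) : ℝ := p / (p - 1)

/-- A `(p₀', p⃗')`-block associated with the mixed Morrey space `M^{p₀}_{p⃗}`. -/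
def IsBlock (n : ℕ) (p₀ : ℝ) (p : Fin n → ℝ) (b : (Fin n → ℝ) → ℝ) : Prop :=
  ∃ (x : Fin n → ℝ) (r : ℝ), 0 < r ∧ (∀ y, y ∉ cube n x r → b y = 0) ∧
    mixedLpNorm n (fun i => conjExp (p i)) b
      ≤ ENNReal.ofReal r ^ ((n : ℝ) / p₀ - ∑ i, 1 / p i)

/-- Norm of the block space `B^{p₀'}_{p⃗'}` (`⊤` if no decomposition exists). -/
noncomputable def blockNorm (n : ℕ) (p₀ : ℝ) (p : Fin n → ℝ) (f : (Fin n → ℝ) → ℝ) : ℝ≥0∞ :=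
  ⨅ (c : ℕ → ℝ) (b : ℕ → (Fin n → ℝ) → ℝ) (_ : Summable fun i => |c i|)
    (_ : ∀ i, IsBlock n p₀ p (b i)) (_ : ∀ x, HasSum (fun i => c i * b i x) (f x)),
    ENNReal.ofReal (∑' i, |c i|)

/-- Hardy–Littlewood maximal function over cubes. -/
noncomputable def hlMax (n : ℕ) (f : (Fin n → ℝ) → ℝ) (x : Fin n → ℝ) : ℝ≥0∞ :=
  ⨆ (z : Fin n → ℝ) (r : ℝ) (_ : 0 < r) (_ : x ∈ cube n z r),
    ENNReal.ofReal r ^ (-(n : ℝ)) * ∫⁻ y in cube n z r, ENNReal.ofReal |f y|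

/-! Test the Morrey norm of `χ_Q`, `Q` of side `r`, on a cube `Q'` of side `s`. Since `Q ∩ Q'`
lies in a cube of side `min s r` and the mixed norm of the indicator of a cube of side `ℓ` is
`ℓ ^ (∑ 1 / pᵢ)`, the tested quantity is at most `s ^ (n / p₀ - ∑ 1 / pᵢ) * min s r ^ (∑ 1 / pᵢ)`.
As `0 ≤ n / p₀ ≤ ∑ 1 / pᵢ`, this increases in `s` up to `s = r` and decreases afterwards, so it is
at most `r ^ (n / p₀)`, the value attained at `Q' = Q`. -/

section

variable {n : ℕ}

lemma Fin.snoc_mem_univ_pi_iff {s : Fin (n + 1) → Set ℝ} {y : Fin n → ℝ} {t : ℝ} :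
    (Fin.snoc y t : Fin (n + 1) → ℝ) ∈ Set.univ.pi s ↔
      y ∈ Set.univ.pi (fun i => s i.castSucc) ∧ t ∈ s (Fin.last n) := by
  simp only [Set.mem_univ_pi, Fin.forall_fin_succ', Fin.snoc_castSucc, Fin.snoc_last]

lemma mixedNorm_zero {p : Fin n → ℝ} (hp : ∀ i, 0 < p i) : mixedNorm n p (fun _ => 0) = 0 := by
  induction n with
  | zero => rfl
  | succ n ih =>
    have hlast := hp (Fin.last n)
    rw [mixedNorm, ih fun i => hp _, ENNReal.zero_rpow_of_pos hlast, lintegral_zero,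
      ENNReal.zero_rpow_of_pos (one_div_pos.mpr hlast)]

lemma mixedNorm_mono {p : Fin n → ℝ} (hp : ∀ i, 0 ≤ p i) {f g : (Fin n → ℝ) → ℝ≥0∞}
    (hfg : f ≤ g) : mixedNorm n p f ≤ mixedNorm n p g := by
  induction n with
  | zero => exact hfg _
  | succ n ih =>
    have hlast := hp (Fin.last n)
    refine ENNReal.rpow_le_rpow (lintegral_mono fun t => ?_) (one_div_nonneg.mpr hlast)
    exact ENNReal.rpow_le_rpow (ih (fun i => hp _) fun y => hfg _) hlast

lemma mixedNorm_indicator_univ_pi {p : Fin n → ℝ} (hp : ∀ i, 0 < p i) {s : Fin n → Set ℝ}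
    (hs : ∀ i, MeasurableSet (s i)) :
    mixedNorm n p ((Set.univ.pi s).indicator fun _ => 1) = ∏ i, volume (s i) ^ (1 / p i) := by
  classical
  induction n with
  | zero => simp [mixedNorm]
  | succ n ih =>
    have hlast := hp (Fin.last n)
    obtain ⟨C, hC⟩ : ∃ C, ∏ i : Fin n, volume (s i.castSucc) ^ (1 / p i.castSucc) = C :=
      ⟨_, rfl⟩
    have slice (t : ℝ) : mixedNorm n (fun i => p i.castSucc)
        (fun y => (Set.univ.pi s).indicator (fun _ => 1) (Fin.snoc y t))
          = (s (Fin.last n)).indicator (fun _ => C) t := by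
      by_cases ht : t ∈ s (Fin.last n)
      · rw [Set.indicator_of_mem ht, ← hC, ← ih (fun i => hp i.castSucc) fun i => hs i.castSucc]
        congr 1 with y
        simp only [Set.indicator_apply, Fin.snoc_mem_univ_pi_iff, ht, and_true]
      · rw [Set.indicator_of_notMem ht]
        convert mixedNorm_zero fun i => hp i.castSucc using 2 with y
        simp only [Set.indicator_apply, Fin.snoc_mem_univ_pi_iff, ht, and_false, if_false]
    have slice_rpow (t : ℝ) : (s (Fin.last n)).indicator (fun _ => C) t ^ p (Fin.last n)
        = (s (Fin.last n)).indicator (fun _ => C ^ p (Fin.last n)) t := by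
      by_cases ht : t ∈ s (Fin.last n) <;> simp [ht, ENNReal.zero_rpow_of_pos hlast]
    rw [mixedNorm]
    simp_rw [slice, slice_rpow]
    rw [lintegral_indicator (hs _), setLIntegral_const,
      ENNReal.mul_rpow_of_nonneg _ _ (one_div_nonneg.mpr hlast.le), ← ENNReal.rpow_mul,
      mul_one_div_cancel hlast.ne', ENNReal.rpow_one, ← hC, Fin.prod_univ_castSucc]

lemma mixedLpNorm_indicator_one (p : Fin n → ℝ) (S : Set (Fin n → ℝ)) :
    mixedLpNorm n p (S.indicator fun _ => 1) = mixedNorm n p (S.indicator fun _ => 1) := by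
  rw [mixedLpNorm]
  congr 1 with y
  by_cases hy : y ∈ S <;> simp [hy]

lemma cube_eq_univ_pi (x : Fin n → ℝ) {r : ℝ} (hr : 0 < r) :
    cube n x r = Set.univ.pi fun i => Set.Ioo (x i - r / 2) (x i + r / 2) := by
  ext y
  rw [cube, Metric.mem_ball, dist_pi_lt_iff (half_pos hr), Set.mem_univ_pi]
  refine forall_congr' fun i => ?_
  rw [Real.dist_eq, abs_sub_lt_iff, Set.mem_Ioo]
  constructor <;> rintro ⟨h1, h2⟩ <;> constructor <;> linarith

lemma ENNReal.rpow_sum {ι : Type*} (s : Finset ι) {a : ℝ≥0∞} (ha₀ : a ≠ 0) (ha : a ≠ ⊤)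
    (f : ι → ℝ) : a ^ (∑ i ∈ s, f i) = ∏ i ∈ s, a ^ f i := by
  induction s using Finset.cons_induction with
  | empty => simp
  | cons i s hi ih => rw [Finset.sum_cons, Finset.prod_cons, ENNReal.rpow_add _ _ ha₀ ha, ih]

lemma mixedLpNorm_indicator_cube {p : Fin n → ℝ} (hp : ∀ i, 0 < p i) (x : Fin n → ℝ) {r : ℝ}
    (hr : 0 < r) :
    mixedLpNorm n p ((cube n x r).indicator fun _ => 1) = ENNReal.ofReal r ^ ∑ i, 1 / p i := by
  rw [mixedLpNorm_indicator_one, cube_eq_univ_pi x hr,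
    mixedNorm_indicator_univ_pi hp fun _ => measurableSet_Ioo,
    ENNReal.rpow_sum _ (ENNReal.ofReal_pos.mpr hr).ne' ENNReal.ofReal_ne_top]
  congr! 2 with i
  rw [Real.volume_Ioo]
  ring_nf

lemma mixedLpNorm_indicator_mono {p : Fin n → ℝ} (hp : ∀ i, 0 ≤ p i) {S T : Set (Fin n → ℝ)}
    (hST : S ⊆ T) :
    mixedLpNorm n p (S.indicator fun _ => 1) ≤ mixedLpNorm n p (T.indicator fun _ => 1) := by
  simp only [mixedLpNorm_indicator_one]
  exact mixedNorm_mono hp (Set.indicator_le_indicator_of_subset hST fun _ => zero_le)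

lemma mixedLpNorm_indicator_cube_inter_cube_le {p : Fin n → ℝ} (hp : ∀ i, 0 < p i)
    (z x : Fin n → ℝ) {s r : ℝ} (hs : 0 < s) (hr : 0 < r) :
    mixedLpNorm n p ((cube n z s ∩ cube n x r).indicator fun _ => 1)
      ≤ ENNReal.ofReal (min s r) ^ ∑ i, 1 / p i := by
  have hp' i := (hp i).le
  rcases le_total s r with hsr | hrs
  · rw [min_eq_left hsr, ← mixedLpNorm_indicator_cube hp z hs]
    exact mixedLpNorm_indicator_mono hp' Set.inter_subset_left
  · rw [min_eq_right hrs, ← mixedLpNorm_indicator_cube hp x hr]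
    exact mixedLpNorm_indicator_mono hp' Set.inter_subset_right

lemma ofReal_rpow_sub_mul_min_rpow_le {s r α β : ℝ} (hs : 0 < s) (hr : 0 < r) (hα : 0 ≤ α)
    (hαβ : α ≤ β) :
    ENNReal.ofReal s ^ (α - β) * ENNReal.ofReal (min s r) ^ β ≤ ENNReal.ofReal r ^ α := by
  rw [ENNReal.ofReal_rpow_of_pos hs, ENNReal.ofReal_rpow_of_pos (lt_min hs hr),
    ENNReal.ofReal_rpow_of_pos hr, ← ENNReal.ofReal_mul (by positivity)]
  refine ENNReal.ofReal_le_ofReal ?_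
  rcases le_total s r with hsr | hrs
  · rw [min_eq_left hsr, ← Real.rpow_add hs, sub_add_cancel]
    exact Real.rpow_le_rpow hs.le hsr hα
  · rw [min_eq_right hrs]
    calc s ^ (α - β) * r ^ β ≤ r ^ (α - β) * r ^ β :=
          mul_le_mul_of_nonneg_right (Real.rpow_le_rpow_of_nonpos hr hrs (by linarith))
            (by positivity)
      _ = r ^ α := by rw [← Real.rpow_add hr, sub_add_cancel]

end

/-- The mixed Morrey norm of the indicator of a cube `Q` is `|Q|^{1/p₀}`. -/
theorem morrey_norm_indicator_cube (n : ℕ) (p₀ : ℝ) (p : Fin n → ℝ)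
    (hp₀ : 0 < p₀) (hp : ∀ i, 0 < p i) (hcond : (n : ℝ) / p₀ ≤ ∑ i, 1 / p i)
    (x : Fin n → ℝ) (r : ℝ) (hr : 0 < r) :
    morreyNorm n p₀ p (Set.indicator (cube n x r) (fun _ => (1 : ℝ)))
      = ENNReal.ofReal r ^ ((n : ℝ) / p₀) := by
  rw [morreyNorm]
  refine le_antisymm (iSup_le fun z => iSup₂_le fun s hs => ?_) ?_
  · rw [Set.indicator_indicator]
    calc _ ≤ ENNReal.ofReal s ^ ((n : ℝ) / p₀ - ∑ i, 1 / p i)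
            * ENNReal.ofReal (min s r) ^ ∑ i, 1 / p i := by
          gcongr
          exact mixedLpNorm_indicator_cube_inter_cube_le hp z x hs hr
      _ ≤ ENNReal.ofReal r ^ ((n : ℝ) / p₀) :=
          ofReal_rpow_sub_mul_min_rpow_le hs hr (by positivity) hcond
  · refine le_iSup_of_le x (le_iSup₂_of_le r hr (le_of_eq ?_))
    have hr₀ := (ENNReal.ofReal_pos.mpr hr).ne'
    rw [Set.indicator_indicator, Set.inter_self, mixedLpNorm_indicator_cube hp x hr,
      ← ENNReal.rpow_add _ _ hr₀ ENNReal.ofReal_ne_top, sub_add_cancel]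
end

section
/- If X is a ball Banach function space on which the Hardy–Littlewood maximal operator M is bounded, then for every cube Q, |Q| ∼ ‖χ_Q‖_X · ‖χ_Q‖_{X'}, with implicit constants independent of Q. -/
open MeasureTheory ENNReal Filter Topology

/-- A ball Banach function space on `ℝⁿ`. -/
structure BallBanachFS (n : ℕ) where
  N : ((Fin n → ℝ) → ℝ) → ℝ≥0∞
  n_zero : N 0 = 0
  n_triangle : ∀ f g, N (f + g) ≤ N f + N g
  n_smul : ∀ (c : ℝ) (f), N (c • f) = ENNReal.ofReal |c| * N f
  n_mono : ∀ f g, (∀ᵐ x ∂(volume : Measure (Fin n → ℝ)), |g x| ≤ |f x|) → N g ≤ N f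
  n_fatou : ∀ (f : ℕ → (Fin n → ℝ) → ℝ) (F : (Fin n → ℝ) → ℝ),
    (∀ᵐ x ∂(volume : Measure (Fin n → ℝ)),
      (∀ m, 0 ≤ f m x) ∧ Monotone (fun m => f m x) ∧
        Tendsto (fun m => f m x) atTop (𝓝 (F x))) →
    Tendsto (fun m => N (f m)) atTop (𝓝 (N F))
  cube_mem : ∀ (x : Fin n → ℝ) (r : ℝ), 0 < r →
    N (Set.indicator (cube n x r) (fun _ => (1 : ℝ))) < ⊤
  cube_int : ∀ (x : Fin n → ℝ) (r : ℝ), 0 < r → ∃ C : ℝ≥0∞, C ≠ ⊤ ∧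
    ∀ f : (Fin n → ℝ) → ℝ, (∀ y, 0 ≤ f y) →
      ∫⁻ y in cube n x r, ENNReal.ofReal (f y) ≤ C * N f

/-- Köthe dual (associate) norm of a ball Banach function space. -/
noncomputable def kotheNorm {n : ℕ} (X : BallBanachFS n) (f : (Fin n → ℝ) → ℝ) : ℝ≥0∞ :=
  ⨆ (g : (Fin n → ℝ) → ℝ) (_ : X.N g ≤ 1), ∫⁻ x, ENNReal.ofReal |f x * g x|

/-!
The lower bound is the Hölder inequality of the Köthe dual applied to `χ_Q · χ_Q`:
`|Q| = ∫ χ_Q χ_Q ≤ ‖χ_Q‖_{X'} ‖χ_Q‖_X`.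

For the upper bound, `M g ≥ ⨍_Q |g|` on `Q`, so `(⨍_Q |g|) ‖χ_Q‖_X ≤ ‖M g‖_X ≤ C ‖g‖_X`; the
supremum over `‖g‖_X ≤ 1` gives `‖χ_Q‖_{X'} ‖χ_Q‖_X ≤ C |Q|`. Since `M g` is `ℝ≥0∞`-valued and
enters `X` through `toReal`, which sends `∞` to `0`, the comparison is first made for bounded `g`,
where `M g` is finite, and then extended by approximating `∫_Q |g|` from below by simple functions
(which also needs no measurability of `g`).
-/

open scoped NNReal

section Cube

variable {n : ℕ}

lemma measurableSet_cube (x : Fin n → ℝ) (r : ℝ) : MeasurableSet (cube n x r) :=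
  measurableSet_ball

lemma mem_cube_self (x : Fin n → ℝ) {r : ℝ} (hr : 0 < r) : x ∈ cube n x r :=
  Metric.mem_ball_self (half_pos hr)

lemma volume_cube (x : Fin n → ℝ) {r : ℝ} (hr : 0 < r) :
    volume (cube n x r) = ENNReal.ofReal r ^ (n : ℝ) := by
  rw [cube, Real.volume_pi_ball x (half_pos hr), Fintype.card_fin,
    mul_div_cancel₀ r two_ne_zero, ENNReal.ofReal_pow hr.le, ← ENNReal.rpow_natCast]

lemma inv_volume_cube (x : Fin n → ℝ) {r : ℝ} (hr : 0 < r) :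
    (volume (cube n x r))⁻¹ = ENNReal.ofReal r ^ (-(n : ℝ)) := by
  rw [volume_cube x hr, ENNReal.rpow_neg]

lemma volume_cube_ne_zero (x : Fin n → ℝ) {r : ℝ} (hr : 0 < r) : volume (cube n x r) ≠ 0 :=
  (Metric.measure_ball_pos volume x (half_pos hr)).ne'

lemma volume_cube_ne_top (x : Fin n → ℝ) (r : ℝ) : volume (cube n x r) ≠ ⊤ :=
  measure_ball_lt_top.ne

end Cube

section Integrals

variable {α : Type*} [MeasurableSpace α] {μ : Measure α}

lemma setLIntegral_ofReal_indicator_one {s : Set α} (hs : MeasurableSet s) :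
    ∫⁻ y in s, ENNReal.ofReal (s.indicator (fun _ => (1 : ℝ)) y) ∂μ = μ s := by
  rw [setLIntegral_congr_fun (g := fun _ => 1) hs fun y hy => by simp [hy], setLIntegral_one]

lemma lintegral_abs_indicator_one_mul {s : Set α} (hs : MeasurableSet s) (g : α → ℝ) :
    ∫⁻ y, ENNReal.ofReal |s.indicator (fun _ => (1 : ℝ)) y * g y| ∂μ
      = ∫⁻ y in s, ENNReal.ofReal |g y| ∂μ := by
  rw [← lintegral_indicator hs]
  congr 1 with y
  by_cases hy : y ∈ s <;> simp [hy]

lemma lintegral_mul_le_of_forall_simpleFunc_le {f : α → ℝ≥0∞} {b c : ℝ≥0∞}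
    (h : ∀ φ : SimpleFunc α ℝ≥0, (∀ x, (φ x : ℝ≥0∞) ≤ f x) → (∫⁻ x, φ x ∂μ) * b ≤ c) :
    (∫⁻ x, f x ∂μ) * b ≤ c := by
  rw [lintegral_eq_nnreal, ENNReal.iSup_mul]
  refine iSup_le fun φ => ?_
  rw [ENNReal.iSup_mul]
  refine iSup_le fun hφ => ?_
  rw [← SimpleFunc.lintegral_eq_lintegral]
  exact h φ hφ

end Integrals

section MaximalFunction

variable {n : ℕ}

lemma inv_volume_cube_mul_lintegral_le_hlMax (f : (Fin n → ℝ) → ℝ) {z y : Fin n → ℝ} {r : ℝ}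
    (hr : 0 < r) (hy : y ∈ cube n z r) :
    (volume (cube n z r))⁻¹ * ∫⁻ y in cube n z r, ENNReal.ofReal |f y| ≤ hlMax n f y := by
  rw [inv_volume_cube z hr]
  exact le_iSup_of_le z <| le_iSup_of_le r <| le_iSup_of_le hr <| le_iSup_of_le hy le_rfl

lemma hlMax_le_of_abs_le {f : (Fin n → ℝ) → ℝ} {k : ℝ≥0} (hf : ∀ y, |f y| ≤ k)
    (y : Fin n → ℝ) : hlMax n f y ≤ k := by
  refine iSup₂_le fun z r => iSup₂_le fun hr _ => ?_
  rw [← inv_volume_cube z hr]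
  calc (volume (cube n z r))⁻¹ * ∫⁻ y in cube n z r, ENNReal.ofReal |f y|
      ≤ (volume (cube n z r))⁻¹ * ∫⁻ _ in cube n z r, (k : ℝ≥0∞) := by
        gcongr with y
        simpa using ENNReal.ofReal_le_ofReal (hf y)
    _ = k := by
        rw [setLIntegral_const, mul_comm _ (volume _),
          ENNReal.inv_mul_cancel_left (volume_cube_ne_zero z hr) (volume_cube_ne_top z r)]

end MaximalFunction

namespace BallBanachFS

variable {n : ℕ} (X : BallBanachFS n)

lemma N_indicator_cube_ne_zero {x : Fin n → ℝ} {r : ℝ} (hr : 0 < r) :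
    X.N ((cube n x r).indicator fun _ => 1) ≠ 0 := by
  obtain ⟨C, -, hC⟩ := X.cube_int x r hr
  have hvol : volume (cube n x r) ≤ C * X.N ((cube n x r).indicator fun _ => 1) := by
    rw [← setLIntegral_ofReal_indicator_one (measurableSet_cube x r)]
    exact hC _ (Set.indicator_nonneg fun _ _ => zero_le_one)
  intro h0
  rw [h0, mul_zero, nonpos_iff_eq_zero] at hvol
  exact volume_cube_ne_zero x hr hvol

lemma lintegral_abs_mul_le_kotheNorm_mul (f g : (Fin n → ℝ) → ℝ) (hg₀ : X.N g ≠ 0)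
    (hg : X.N g ≠ ⊤) : ∫⁻ y, ENNReal.ofReal |f y * g y| ≤ kotheNorm X f * X.N g := by
  set t := (X.N g).toReal
  have ht : 0 < t := ENNReal.toReal_pos hg₀ hg
  have hN : X.N (t⁻¹ • g) ≤ 1 := by
    rw [X.n_smul, abs_of_pos (inv_pos.mpr ht), ← ENNReal.ofReal_toReal hg,
      ← ENNReal.ofReal_mul (inv_nonneg.mpr ht.le), inv_mul_cancel₀ ht.ne', ENNReal.ofReal_one]
  have hscale : ∫⁻ y, ENNReal.ofReal |f y * (t⁻¹ • g) y|
      = ENNReal.ofReal t⁻¹ * ∫⁻ y, ENNReal.ofReal |f y * g y| := by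
    rw [← lintegral_const_mul' _ _ ENNReal.ofReal_ne_top]
    congr 1 with y
    rw [Pi.smul_apply, smul_eq_mul, mul_left_comm, abs_mul, abs_of_pos (inv_pos.mpr ht),
      ENNReal.ofReal_mul (inv_nonneg.mpr ht.le)]
  calc ∫⁻ y, ENNReal.ofReal |f y * g y|
      = ENNReal.ofReal t * (ENNReal.ofReal t⁻¹ * ∫⁻ y, ENNReal.ofReal |f y * g y|) := by
        rw [← mul_assoc, ← ENNReal.ofReal_mul ht.le, mul_inv_cancel₀ ht.ne', ENNReal.ofReal_one,
          one_mul]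
    _ ≤ ENNReal.ofReal t * kotheNorm X f := by
        rw [← hscale]
        gcongr
        exact le_iSup₂ (f := fun (g : (Fin n → ℝ) → ℝ) (_ : X.N g ≤ 1) =>
          ∫⁻ y, ENNReal.ofReal |f y * g y|) _ hN
    _ = kotheNorm X f * X.N g := by rw [ENNReal.ofReal_toReal hg, mul_comm]

lemma volume_le_N_mul_kotheNorm_indicator {s : Set (Fin n → ℝ)} (hs : MeasurableSet s)
    (h₀ : X.N (s.indicator fun _ => 1) ≠ 0) (h : X.N (s.indicator fun _ => 1) ≠ ⊤) :
    volume s ≤ X.N (s.indicator fun _ => 1) * kotheNorm X (s.indicator fun _ => 1) := by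
  calc volume s = ∫⁻ y, ENNReal.ofReal |s.indicator (fun _ => (1 : ℝ)) y
        * s.indicator (fun _ => (1 : ℝ)) y| := by
        rw [lintegral_abs_indicator_one_mul hs]
        exact ((setLIntegral_congr_fun (g := fun _ => 1) hs fun y hy => by simp [hy]).trans
          (setLIntegral_one s)).symm
    _ ≤ kotheNorm X (s.indicator fun _ => 1) * X.N (s.indicator fun _ => 1) :=
        X.lintegral_abs_mul_le_kotheNorm_mul _ _ h₀ h
    _ = _ := mul_comm _ _

lemma mul_N_indicator_le_N_toReal {s : Set (Fin n → ℝ)} {a : ℝ≥0∞} {F : (Fin n → ℝ) → ℝ≥0∞}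
    (ha : a ≠ ⊤) (hF : ∀ y, F y ≠ ⊤) (haF : ∀ y ∈ s, a ≤ F y) :
    a * X.N (s.indicator fun _ => 1) ≤ X.N fun y => (F y).toReal := by
  rw [← ENNReal.ofReal_toReal ha, ← abs_of_nonneg ENNReal.toReal_nonneg, ← X.n_smul]
  refine X.n_mono _ _ (.of_forall fun y => ?_)
  by_cases hy : y ∈ s
  · simpa [hy] using ENNReal.toReal_mono (hF y) (haF y hy)
  · simp [hy]

variable {X} {C : ℝ≥0∞}

lemma lintegral_cube_mul_N_le_of_abs_le
    (hC : ∀ f, X.N (fun y => (hlMax n f y).toReal) ≤ C * X.N f)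
    {h : (Fin n → ℝ) → ℝ} {k : ℝ≥0} (hk : ∀ y, |h y| ≤ k)
    (x : Fin n → ℝ) {r : ℝ} (hr : 0 < r) :
    (∫⁻ y in cube n x r, ENNReal.ofReal |h y|) * X.N ((cube n x r).indicator fun _ => 1)
      ≤ C * volume (cube n x r) * X.N h := by
  set A := (volume (cube n x r))⁻¹ * ∫⁻ y in cube n x r, ENNReal.ofReal |h y|
  have hAM : ∀ y ∈ cube n x r, A ≤ hlMax n h y :=
    fun y hy => inv_volume_cube_mul_lintegral_le_hlMax h hr hy
  have hMk := hlMax_le_of_abs_le hk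
  have hMtop : ∀ y, hlMax n h y ≠ ⊤ := fun y => ne_top_of_le_ne_top coe_ne_top (hMk y)
  have hA : A * X.N ((cube n x r).indicator fun _ => 1) ≤ C * X.N h :=
    (X.mul_N_indicator_le_N_toReal (ne_top_of_le_ne_top (hMtop x) (hAM x (mem_cube_self x hr)))
      hMtop hAM).trans (hC h)
  calc (∫⁻ y in cube n x r, ENNReal.ofReal |h y|) * X.N ((cube n x r).indicator fun _ => 1)
      = volume (cube n x r) * (A * X.N ((cube n x r).indicator fun _ => 1)) := by
        rw [← mul_assoc, ENNReal.mul_inv_cancel_left (volume_cube_ne_zero x hr)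
          (volume_cube_ne_top x r)]
    _ ≤ volume (cube n x r) * (C * X.N h) := by gcongr
    _ = C * volume (cube n x r) * X.N h := by ring

lemma lintegral_cube_mul_N_le
    (hC : ∀ f, X.N (fun y => (hlMax n f y).toReal) ≤ C * X.N f)
    (g : (Fin n → ℝ) → ℝ) (x : Fin n → ℝ) {r : ℝ} (hr : 0 < r) :
    (∫⁻ y in cube n x r, ENNReal.ofReal |g y|) * X.N ((cube n x r).indicator fun _ => 1)
      ≤ C * volume (cube n x r) * X.N g := by
  refine lintegral_mul_le_of_forall_simpleFunc_le fun φ hφ => ?_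
  obtain ⟨k, hk⟩ := φ.exists_forall_le
  have hφg : ∀ y, |(φ y : ℝ)| ≤ |g y| := fun y => by
    rw [NNReal.abs_eq, ← ENNReal.ofReal_le_ofReal_iff (abs_nonneg _), ENNReal.ofReal_coe_nnreal]
    exact hφ y
  calc (∫⁻ y in cube n x r, (φ y : ℝ≥0∞)) * X.N ((cube n x r).indicator fun _ => 1)
      = (∫⁻ y in cube n x r, ENNReal.ofReal |(φ y : ℝ)|)
          * X.N ((cube n x r).indicator fun _ => 1) := by
        simp only [NNReal.abs_eq, ENNReal.ofReal_coe_nnreal]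
    _ ≤ C * volume (cube n x r) * X.N fun y => (φ y : ℝ) :=
        lintegral_cube_mul_N_le_of_abs_le hC (k := k) (fun y => by simpa using hk y) x hr
    _ ≤ C * volume (cube n x r) * X.N g := by
        gcongr
        exact X.n_mono _ _ (.of_forall hφg)

lemma kotheNorm_indicator_cube_mul_N_le
    (hC : ∀ f, X.N (fun y => (hlMax n f y).toReal) ≤ C * X.N f)
    (x : Fin n → ℝ) {r : ℝ} (hr : 0 < r) :
    kotheNorm X ((cube n x r).indicator fun _ => 1) * X.N ((cube n x r).indicator fun _ => 1)
      ≤ C * volume (cube n x r) := by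
  rw [kotheNorm, ENNReal.iSup_mul]
  refine iSup_le fun g => ?_
  rw [ENNReal.iSup_mul]
  refine iSup_le fun hg => ?_
  rw [lintegral_abs_indicator_one_mul (measurableSet_cube x r)]
  calc _ ≤ C * volume (cube n x r) * X.N g := lintegral_cube_mul_N_le hC g x hr
    _ ≤ C * volume (cube n x r) * 1 := by gcongr
    _ = C * volume (cube n x r) := mul_one _

end BallBanachFS

/-- If the Hardy–Littlewood maximal operator is bounded on a ball Banach function
space `X`, then `|Q| ∼ ‖χ_Q‖_X ‖χ_Q‖_{X'}` uniformly over cubes. -/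
theorem cube_measure_equiv_norm_mul_dual_norm (n : ℕ) (X : BallBanachFS n)
    (hM : ∃ C : ℝ≥0∞, C ≠ ⊤ ∧ ∀ f : (Fin n → ℝ) → ℝ,
      X.N (fun x => (hlMax n f x).toReal) ≤ C * X.N f) :
    ∃ c C : ℝ≥0∞, 0 < c ∧ C ≠ ⊤ ∧
      ∀ (x : Fin n → ℝ) (r : ℝ), 0 < r →
        c * ENNReal.ofReal r ^ (n : ℝ)
            ≤ X.N (Set.indicator (cube n x r) (fun _ => (1 : ℝ)))
              * kotheNorm X (Set.indicator (cube n x r) (fun _ => (1 : ℝ))) ∧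
          X.N (Set.indicator (cube n x r) (fun _ => (1 : ℝ)))
              * kotheNorm X (Set.indicator (cube n x r) (fun _ => (1 : ℝ)))
            ≤ C * ENNReal.ofReal r ^ (n : ℝ) := by
  obtain ⟨C, hC_ne_top, hC⟩ := hM
  refine ⟨1, C, one_pos, hC_ne_top, fun x r hr => ⟨?_, ?_⟩⟩
  · rw [one_mul, ← volume_cube x hr]
    exact X.volume_le_N_mul_kotheNorm_indicator (measurableSet_cube x r)
      (X.N_indicator_cube_ne_zero hr) (X.cube_mem x r hr).ne
  · rw [mul_comm, ← volume_cube x hr]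
    exact BallBanachFS.kotheNorm_indicator_cube_mul_N_le hC x hr
end
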